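/- Let m > 0, β > 0, and fix x ∈ ℝ³. Define D(z) := (2π)^{−3} ∫_{ℝ³} e^{i⟨p,x⟩} · (e^{−i ω_p z} + e^{−β ω_p} e^{i ω_p z}) / (2 ω_p (1 − e^{−β ω_p})) dp. Then for every z in the open strip S_β := {z ∈ ℂ : −β < Im(z) < 0} the integrand is absolutely integrable, and D is holomorphic on S_β. (D is the analytic continuation in time of the two-point function of the quasi-free KMS state of the free scalar field of mass m at inverse temperature β.) -/

import Mathlib

/-!
STATEMENT 9: the analytically continued thermal two-point function
`D(z) = (2π)⁻³ ∫ e^{i⟨p,x⟩}(e^{−iω_p z} + e^{−βω_p} e^{iω_p z}) / (2ω_p(1 − e^{−βω_p})) dp`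
is given by an absolutely convergent integral on the strip `−β < Im z < 0` and is
holomorphic there.
-/

noncomputable section

open MeasureTheory Complex

/-- Euclidean `ℝ³`. -/
abbrev E3 := EuclideanSpace ℝ (Fin 3)

/-- `ω_p = √(‖p‖² + m²)`. -/
def omega (m : ℝ) (p : E3) : ℝ := Real.sqrt (‖p‖ ^ 2 + m ^ 2)

lemma omega_ge (m : ℝ) (hm : 0 ≤ m) (p : E3) : m ≤ omega m p := by
  calc m = Real.sqrt (m ^ 2) := (Real.sqrt_sq hm).symm
    _ ≤ omega m p := Real.sqrt_le_sqrt (by nlinarith [sq_nonneg ‖p‖])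

lemma omega_ge_norm (m : ℝ) (p : E3) : ‖p‖ ≤ omega m p := by
  calc ‖p‖ = Real.sqrt (‖p‖ ^ 2) := (Real.sqrt_sq (norm_nonneg p)).symm
    _ ≤ omega m p := Real.sqrt_le_sqrt (by nlinarith [sq_nonneg m])

lemma omega_pos (m : ℝ) (hm : 0 < m) (p : E3) : 0 < omega m p :=
  lt_of_lt_of_le hm (omega_ge m hm.le p)

lemma omega_continuous (m : ℝ) : Continuous (omega m) :=
  ((continuous_norm.pow 2).add continuous_const).sqrt

lemma integrable_exp_decay {c : ℝ} (hc : 0 < c) :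
    Integrable (fun p : E3 => Real.exp (-(c * ‖p‖))) := by
  have hdim : (Module.finrank ℝ E3 : ℝ) < 4 := by
    simp only [finrank_euclideanSpace_fin]; norm_num
  have h4 : Integrable (fun p : E3 => (1 + ‖p‖) ^ (-(4:ℝ))) := integrable_one_add_norm hdim
  refine ((h4.const_mul (Real.exp c * 24 / c ^ 4)).mono'
    ((Real.continuous_exp.comp (continuous_const.mul continuous_norm).neg).aestronglyMeasurable) ?_)
  filter_upwards with p
  have h1 : (0:ℝ) < 1 + ‖p‖ := by positivity
  have key : (c * (1 + ‖p‖)) ^ 4 ≤ Real.exp (c * (1 + ‖p‖)) * 24 := by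
    have h := Real.pow_div_factorial_le_exp (x := c * (1 + ‖p‖)) (by positivity) 4
    rw [div_le_iff₀ (by norm_num [Nat.factorial])] at h
    calc (c * (1 + ‖p‖)) ^ 4 ≤ Real.exp (c * (1 + ‖p‖)) * (Nat.factorial 4 : ℝ) := h
      _ = Real.exp (c * (1 + ‖p‖)) * 24 := by norm_num [Nat.factorial]
  rw [Real.norm_eq_abs, abs_of_pos (Real.exp_pos _),
    Real.rpow_neg h1.le, show ((4:ℝ) = (4:ℕ)) by norm_num, Real.rpow_natCast,
    show Real.exp c * 24 / c ^ 4 * ((1 + ‖p‖) ^ 4)⁻¹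
      = Real.exp c * 24 / (c * (1 + ‖p‖)) ^ 4 by rw [mul_pow, ← div_div, div_eq_mul_inv (Real.exp c * 24 / c ^ 4)],
    le_div_iff₀ (by positivity)]
  calc Real.exp (-(c * ‖p‖)) * (c * (1 + ‖p‖)) ^ 4
      ≤ Real.exp (-(c * ‖p‖)) * (Real.exp (c * (1 + ‖p‖)) * 24) := by
        gcongr
    _ = Real.exp (-(c * ‖p‖) + c * (1 + ‖p‖)) * 24 := by rw [← mul_assoc, ← Real.exp_add]
    _ = Real.exp c * 24 := by rw [show -(c * ‖p‖) + c * (1 + ‖p‖) = c by ring]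


/-- The integrand of the analytically continued thermal two-point function. -/
def thermalIntegrand (m β : ℝ) (x : E3) (z : ℂ) (p : E3) : ℂ :=
  Complex.exp (Complex.I * Complex.ofReal (inner ℝ p x)) *
    (Complex.exp (-Complex.I * (omega m p : ℂ) * z) +
      Complex.exp (-(β * omega m p : ℝ)) * Complex.exp (Complex.I * (omega m p : ℂ) * z)) /
    (2 * (omega m p : ℂ) * (1 - Complex.exp (-(β * omega m p : ℝ))))

/-- the `z`-derivative of the integrand -/
def thermalIntegrand' (m β : ℝ) (x : E3) (z : ℂ) (p : E3) : ℂ :=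
  Complex.exp (Complex.I * Complex.ofReal (inner ℝ p x)) *
    (-Complex.I * (omega m p : ℂ) * Complex.exp (-Complex.I * (omega m p : ℂ) * z) +
      Complex.exp (-(β * omega m p : ℝ)) *
        (Complex.I * (omega m p : ℂ) * Complex.exp (Complex.I * (omega m p : ℂ) * z))) /
    (2 * (omega m p : ℂ) * (1 - Complex.exp (-(β * omega m p : ℝ))))

lemma abs_exp_neg (m β : ℝ) (p : E3) :
    Complex.exp (-(β * omega m p : ℝ)) = ((Real.exp (-(β * omega m p)) : ℝ) : ℂ) := by
  rw [← Complex.ofReal_neg, ← Complex.ofReal_exp]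

lemma denom_eq (m β : ℝ) (p : E3) :
    2 * (omega m p : ℂ) * (1 - Complex.exp (-(β * omega m p : ℝ)))
      = ((2 * omega m p * (1 - Real.exp (-(β * omega m p))) : ℝ) : ℂ) := by
  rw [abs_exp_neg]; push_cast; ring

lemma denom_lb {m β : ℝ} (hm : 0 < m) (hβ : 0 < β) (p : E3) :
    2 * m * (1 - Real.exp (-(β * m))) ≤ 2 * omega m p * (1 - Real.exp (-(β * omega m p))) := by
  have h1 := omega_ge m hm.le p
  have h2 : Real.exp (-(β * omega m p)) ≤ Real.exp (-(β * m)) := by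
    apply Real.exp_le_exp.2; nlinarith
  have h3 : Real.exp (-(β * m)) < 1 := by
    rw [Real.exp_lt_one_iff]; nlinarith
  nlinarith [Real.exp_pos (-(β * omega m p))]

lemma denom_pos {m β : ℝ} (hm : 0 < m) (hβ : 0 < β) :
    0 < 2 * m * (1 - Real.exp (-(β * m))) := by
  have h3 : Real.exp (-(β * m)) < 1 := by
    rw [Real.exp_lt_one_iff]; nlinarith
  nlinarith

lemma num_abs (m : ℝ) (x : E3) (z : ℂ) (p : E3) :
    ‖(Complex.exp (Complex.I * Complex.ofReal (inner ℝ p x)))‖ = 1 ∧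
    ‖(Complex.exp (-Complex.I * (omega m p : ℂ) * z))‖ = Real.exp (omega m p * z.im) ∧
    ‖(Complex.exp (Complex.I * (omega m p : ℂ) * z))‖ = Real.exp (-(omega m p * z.im)) := by
  refine ⟨?_, ?_, ?_⟩ <;>
    simp [Complex.norm_exp, Complex.mul_re, Complex.mul_im]

lemma exp_sum_le {m β a b : ℝ} (hm : 0 < m) (ha : 0 < a) (hb : 0 < b) {z : ℂ}
    (hz1 : z.im ≤ -a) (hz2 : b ≤ β + z.im) (p : E3) :
    Real.exp (omega m p * z.im) + Real.exp (-(β * omega m p)) * Real.exp (-(omega m p * z.im))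
      ≤ Real.exp (-(a * ‖p‖)) + Real.exp (-(b * ‖p‖)) := by
  have hω0 := omega_pos m hm p
  have hωn := omega_ge_norm m p
  have hp : (0:ℝ) ≤ ‖p‖ := norm_nonneg p
  apply add_le_add
  · apply Real.exp_le_exp.2
    nlinarith [mul_nonneg (show (0:ℝ) ≤ -a - z.im by linarith) hω0.le,
      mul_nonneg ha.le (sub_nonneg.2 hωn)]
  · rw [← Real.exp_add]
    apply Real.exp_le_exp.2
    nlinarith [mul_nonneg (show (0:ℝ) ≤ β + z.im - b by linarith) hω0.le,
      mul_nonneg hb.le (sub_nonneg.2 hωn)]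

lemma norm_thermal_le {m β : ℝ} (hm : 0 < m) (hβ : 0 < β) (x : E3) {a b : ℝ}
    (ha : 0 < a) (hb : 0 < b) {z : ℂ} (hz1 : z.im ≤ -a) (hz2 : b ≤ β + z.im) (p : E3) :
    ‖thermalIntegrand m β x z p‖ ≤
      (2 * m * (1 - Real.exp (-(β * m))))⁻¹ *
        (Real.exp (-(a * ‖p‖)) + Real.exp (-(b * ‖p‖))) := by
  obtain ⟨h1, h2, h3⟩ := num_abs m x z p
  have hω0 := omega_pos m hm p
  have hd0 := denom_pos hm hβ
  have hdl := denom_lb hm hβ p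
  rw [thermalIntegrand, norm_div, norm_mul, h1, one_mul,
    denom_eq, Complex.norm_real, Real.norm_eq_abs, abs_of_pos (by linarith), inv_mul_eq_div]
  apply div_le_div₀ (by positivity) ?_ hd0 hdl
  calc ‖(Complex.exp (-Complex.I * (omega m p : ℂ) * z) +
        Complex.exp (-(β * omega m p : ℝ)) * Complex.exp (Complex.I * (omega m p : ℂ) * z))‖
      ≤ ‖(Complex.exp (-Complex.I * (omega m p : ℂ) * z))‖ +
        ‖(Complex.exp (-(β * omega m p : ℝ)) *
          Complex.exp (Complex.I * (omega m p : ℂ) * z))‖ := norm_add_le _ _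
    _ = Real.exp (omega m p * z.im) +
        Real.exp (-(β * omega m p)) * Real.exp (-(omega m p * z.im)) := by
        rw [norm_mul, h2, h3, abs_exp_neg, Complex.norm_real, Real.norm_eq_abs,
          abs_of_pos (Real.exp_pos _)]
    _ ≤ _ := exp_sum_le hm ha hb hz1 hz2 p

lemma norm_thermal'_le {m β : ℝ} (hm : 0 < m) (hβ : 0 < β) (x : E3) {a b : ℝ}
    (ha : 0 < a) (hb : 0 < b) {z : ℂ} (hz1 : z.im ≤ -a) (hz2 : b ≤ β + z.im) (p : E3) :
    ‖thermalIntegrand' m β x z p‖ ≤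
      (2 * (1 - Real.exp (-(β * m))))⁻¹ *
        (Real.exp (-(a * ‖p‖)) + Real.exp (-(b * ‖p‖))) := by
  obtain ⟨h1, h2, h3⟩ := num_abs m x z p
  have hω0 := omega_pos m hm p
  have hd0 := denom_pos hm hβ
  have hem : Real.exp (-(β * m)) < 1 := by rw [Real.exp_lt_one_iff]; nlinarith
  have heω : Real.exp (-(β * omega m p)) ≤ Real.exp (-(β * m)) := by
    apply Real.exp_le_exp.2; nlinarith [omega_ge m hm.le p]
  have hdω : 0 < 2 * omega m p * (1 - Real.exp (-(β * omega m p))) := by nlinarith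
  rw [thermalIntegrand', norm_div, norm_mul, h1, one_mul,
    denom_eq, Complex.norm_real, Real.norm_eq_abs, abs_of_pos hdω]
  have hnum : ‖(-Complex.I * (omega m p : ℂ) *
        Complex.exp (-Complex.I * (omega m p : ℂ) * z) +
      Complex.exp (-(β * omega m p : ℝ)) *
        (Complex.I * (omega m p : ℂ) * Complex.exp (Complex.I * (omega m p : ℂ) * z)))‖
      ≤ omega m p * (Real.exp (omega m p * z.im) +
          Real.exp (-(β * omega m p)) * Real.exp (-(omega m p * z.im))) := by
    calc _ ≤ ‖(-Complex.I * (omega m p : ℂ) *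
            Complex.exp (-Complex.I * (omega m p : ℂ) * z))‖ +
          ‖(Complex.exp (-(β * omega m p : ℝ)) *
            (Complex.I * (omega m p : ℂ) * Complex.exp (Complex.I * (omega m p : ℂ) * z)))‖ :=
          norm_add_le _ _
      _ = omega m p * Real.exp (omega m p * z.im) +
          Real.exp (-(β * omega m p)) * (omega m p * Real.exp (-(omega m p * z.im))) := by
          simp only [norm_mul, h2, h3, abs_exp_neg, Complex.norm_real, Real.norm_eq_abs, Complex.norm_I,
            norm_neg, Real.abs_exp, abs_of_pos hω0, one_mul]
      _ = _ := by ring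
  calc ‖_‖ / (2 * omega m p * (1 - Real.exp (-(β * omega m p))))
      ≤ omega m p * (Real.exp (omega m p * z.im) +
          Real.exp (-(β * omega m p)) * Real.exp (-(omega m p * z.im))) /
        (2 * omega m p * (1 - Real.exp (-(β * m)))) := by
        apply div_le_div₀ (by positivity) hnum (by nlinarith) (by nlinarith)
    _ = (Real.exp (omega m p * z.im) +
          Real.exp (-(β * omega m p)) * Real.exp (-(omega m p * z.im))) /
        (2 * (1 - Real.exp (-(β * m)))) := by
        rw [show 2 * omega m p * (1 - Real.exp (-(β * m)))
            = omega m p * (2 * (1 - Real.exp (-(β * m)))) by ring,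
          mul_div_mul_left _ _ (ne_of_gt hω0)]
    _ ≤ _ := by
        rw [inv_mul_eq_div]
        apply div_le_div₀ (by positivity) (exp_sum_le hm ha hb hz1 hz2 p) (by nlinarith) le_rfl

lemma denom_ne_zero {m β : ℝ} (hm : 0 < m) (hβ : 0 < β) (p : E3) :
    2 * (omega m p : ℂ) * (1 - Complex.exp (-(β * omega m p : ℝ))) ≠ 0 := by
  rw [denom_eq, Complex.ofReal_ne_zero]
  have h1 := denom_pos hm hβ
  have h2 := denom_lb hm hβ p
  exact ne_of_gt (by linarith)

lemma continuous_thermal {m β : ℝ} (hm : 0 < m) (hβ : 0 < β) (x : E3) (z : ℂ) :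
    Continuous (thermalIntegrand m β x z) := by
  have hω := omega_continuous m
  have hωC : Continuous fun p : E3 => ((omega m p : ℝ) : ℂ) :=
    Complex.continuous_ofReal.comp hω
  have hinner : Continuous fun p : E3 => ((inner ℝ p x : ℝ) : ℂ) :=
    Complex.continuous_ofReal.comp (continuous_id.inner continuous_const)
  have hbω : Continuous fun p : E3 => (-(β * omega m p : ℝ) : ℂ) :=
    (Complex.continuous_ofReal.comp (continuous_const.mul hω)).neg
  apply Continuous.div
  · exact (Complex.continuous_exp.comp (continuous_const.mul hinner)).mul
      ((Complex.continuous_exp.comp ((continuous_const.mul hωC).mul continuous_const)).add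
        ((Complex.continuous_exp.comp hbω).mul
          (Complex.continuous_exp.comp ((continuous_const.mul hωC).mul continuous_const))))
  · exact ((continuous_const.mul hωC)).mul
      (continuous_const.sub (Complex.continuous_exp.comp hbω))
  · exact fun p => denom_ne_zero hm hβ p

lemma continuous_thermal' {m β : ℝ} (hm : 0 < m) (hβ : 0 < β) (x : E3) (z : ℂ) :
    Continuous (thermalIntegrand' m β x z) := by
  have hω := omega_continuous m
  have hωC : Continuous fun p : E3 => ((omega m p : ℝ) : ℂ) :=
    Complex.continuous_ofReal.comp hω
  have hinner : Continuous fun p : E3 => ((inner ℝ p x : ℝ) : ℂ) :=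
    Complex.continuous_ofReal.comp (continuous_id.inner continuous_const)
  have hbω : Continuous fun p : E3 => (-(β * omega m p : ℝ) : ℂ) :=
    (Complex.continuous_ofReal.comp (continuous_const.mul hω)).neg
  apply Continuous.div
  · exact (Complex.continuous_exp.comp (continuous_const.mul hinner)).mul
      (((continuous_const.mul hωC).mul
          (Complex.continuous_exp.comp ((continuous_const.mul hωC).mul continuous_const))).add
        ((Complex.continuous_exp.comp hbω).mul
          ((continuous_const.mul hωC).mul
            (Complex.continuous_exp.comp ((continuous_const.mul hωC).mul continuous_const)))))
  · exact ((continuous_const.mul hωC)).mul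
      (continuous_const.sub (Complex.continuous_exp.comp hbω))
  · exact fun p => denom_ne_zero hm hβ p

lemma hasDerivAt_thermal (m β : ℝ) (x : E3) (p : E3) (z : ℂ) :
    HasDerivAt (fun w => thermalIntegrand m β x w p) (thermalIntegrand' m β x z p) z := by
  have h1 : HasDerivAt (fun w : ℂ => -Complex.I * (omega m p : ℂ) * w)
      (-Complex.I * (omega m p : ℂ)) z := by
    simpa using (hasDerivAt_id z).const_mul (-Complex.I * (omega m p : ℂ))
  have h2 : HasDerivAt (fun w : ℂ => Complex.I * (omega m p : ℂ) * w)
      (Complex.I * (omega m p : ℂ)) z := by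
    simpa using (hasDerivAt_id z).const_mul (Complex.I * (omega m p : ℂ))
  have hA := h1.cexp
  have hB := (h2.cexp).const_mul (Complex.exp (-(β * omega m p : ℝ)))
  have hsum := ((hA.add hB).const_mul
    (Complex.exp (Complex.I * Complex.ofReal (inner ℝ p x)))).div_const
    (2 * (omega m p : ℂ) * (1 - Complex.exp (-(β * omega m p : ℝ))))
  refine hsum.congr_deriv ?_
  rw [thermalIntegrand']
  ring

lemma integrable_bound {a b K : ℝ} (ha : 0 < a) (hb : 0 < b) :
    Integrable (fun p : E3 => K * (Real.exp (-(a * ‖p‖)) + Real.exp (-(b * ‖p‖)))) :=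
  ((integrable_exp_decay ha).add (integrable_exp_decay hb)).const_mul K

lemma integrable_thermal {m β : ℝ} (hm : 0 < m) (hβ : 0 < β) (x : E3) {a b : ℝ}
    (ha : 0 < a) (hb : 0 < b) {z : ℂ} (hz1 : z.im ≤ -a) (hz2 : b ≤ β + z.im) :
    Integrable (thermalIntegrand m β x z) := by
  refine (integrable_bound (K := (2 * m * (1 - Real.exp (-(β * m))))⁻¹) ha hb).mono'
    (continuous_thermal hm hβ x z).aestronglyMeasurable ?_
  filter_upwards with p
  have h := norm_thermal_le hm hβ x ha hb hz1 hz2 p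
  exact h


/-- `D(z)`, the analytic continuation in time of the thermal two-point function. -/
def Dthermal (m β : ℝ) (x : E3) (z : ℂ) : ℂ :=
  ((2 * Real.pi : ℂ) ^ 3)⁻¹ * ∫ p : E3, thermalIntegrand m β x z p

theorem stmt9 (m β : ℝ) (hm : 0 < m) (hβ : 0 < β) (x : E3) :
    (∀ z : ℂ, -β < z.im → z.im < 0 → Integrable (thermalIntegrand m β x z)) ∧
    DifferentiableOn ℂ (Dthermal m β x) {z : ℂ | -β < z.im ∧ z.im < 0} := by
  have hint : ∀ z : ℂ, -β < z.im → z.im < 0 → Integrable (thermalIntegrand m β x z) := by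
    intro z h1 h2
    exact integrable_thermal hm hβ x (a := -z.im) (b := β + z.im)
      (by linarith) (by linarith) (by linarith) le_rfl
  refine ⟨hint, ?_⟩
  intro z₀ hz₀
  obtain ⟨h1, h2⟩ := hz₀
  set ε : ℝ := min (-z₀.im) (β + z₀.im) / 2 with hε_def
  have hε : 0 < ε := by
    apply div_pos _ two_pos
    exact lt_min (by linarith) (by linarith)
  have hεle1 : 2 * ε ≤ -z₀.im := by
    have := min_le_left (-z₀.im) (β + z₀.im); rw [hε_def]; linarith
  have hεle2 : 2 * ε ≤ β + z₀.im := by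
    have := min_le_right (-z₀.im) (β + z₀.im); rw [hε_def]; linarith
  have him : ∀ w ∈ Metric.ball z₀ ε, w.im ≤ -ε ∧ ε ≤ β + w.im := by
    intro w hw
    have hd : ‖w - z₀‖ < ε := by
      rw [← Complex.dist_eq]; exact Metric.mem_ball.1 hw
    have habs : |w.im - z₀.im| < ε :=
      lt_of_le_of_lt (by simpa [Complex.sub_im] using Complex.abs_im_le_norm (w - z₀)) hd
    rw [abs_lt] at habs
    constructor <;> linarith [habs.1, habs.2]
  have key := hasDerivAt_integral_of_dominated_loc_of_deriv_le (μ := volume)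
    (F := fun w p => thermalIntegrand m β x w p)
    (F' := fun w p => thermalIntegrand' m β x w p) (x₀ := z₀)
    (bound := fun p : E3 => (2 * (1 - Real.exp (-(β * m))))⁻¹ *
      (Real.exp (-(ε * ‖p‖)) + Real.exp (-(ε * ‖p‖)))) (Metric.ball_mem_nhds z₀ hε)
    (Filter.Eventually.of_forall fun w => (continuous_thermal hm hβ x w).aestronglyMeasurable)
    (hint z₀ h1 h2)
    (continuous_thermal' hm hβ x z₀).aestronglyMeasurable
    (Filter.Eventually.of_forall fun p => fun w hw =>
      norm_thermal'_le hm hβ x hε hε (him w hw).1 (him w hw).2 p)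
    (integrable_bound hε hε)
    (Filter.Eventually.of_forall fun p => fun w _ => hasDerivAt_thermal m β x p w)
  exact ((key.2.differentiableAt).const_mul _).differentiableWithinAt

end
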